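/- arXiv:2004.02470 — 3 statements merged into one kernel-verified Lean document; each statement's English description precedes it below -/
import Mathlib

section
/- Let N be a finite nonempty index set and α, γ, φ real numbers. Suppose for every n ∈ N there are real numbers τ_n, σ_n ≥ 0 and J_n ≥ 0 such that α − τ_n + φ = 0, γ − τ_n + φ − σ_n = 0, and the complementarity condition σ_n · J_n = 0 holds. If there exists at least one agent n' ∈ N with J_{n'} > 0 (at least one agent trades risk with the exogenous agent), then α = γ: the within-community contract price equals the exogenous contract price. -/
/-- If at least one agent trades risk with the exogenous agent (J_{n'} > 0),
then the within-community contract price equals the exogenous price: α = γ. -/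
theorem prices_equal_when_exogenous_trade {N : Type*} [Fintype N] [Nonempty N]
    (α γ φ : ℝ) (τ σ J : N → ℝ)
    (hσ : ∀ n, 0 ≤ σ n) (hJ0 : ∀ n, 0 ≤ J n)
    (hW : ∀ n, α - τ n + φ = 0)
    (hJ : ∀ n, γ - τ n + φ - σ n = 0)
    (hcomp : ∀ n, σ n * J n = 0)
    (hex : ∃ n', 0 < J n') :
    α = γ := by
  obtain ⟨n, hn⟩ := hex
  have h1 := hW n
  have h2 := hJ n
  have h3 := hcomp n
  have : σ n = 0 := by
    rcases mul_eq_zero.1 h3 with h | h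
    · exact h
    · exact absurd h (ne_of_gt hn)
  linarith
end

section
/- Let N be a finite nonempty index set and p > 0 a real number. For each n ∈ N let χ_n ∈ [0,1) and π_n ≥ 0 be real numbers, and define the risk-adjusted probability τ_n = p/(1−χ_n) − π_n. Assume the τ_n are aligned across agents, i.e. τ_n = τ_m for all n, m ∈ N, and that π_{n₁} = 0 for some n₁ ∈ N. Then for every n ∈ N: π_n = p·(χ_n − χ_{n₁}) / ((1−χ_{n₁})·(1−χ_n)) and χ_{n₁} ≤ χ_n; in particular χ_{n₁} = min_{n∈N} χ_n, i.e. an agent with vanishing dual π can only be a least risk-averse prosumer, and the common risk-adjusted probability equals p/(1−min_n χ_n). -/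
/-- When the risk-adjusted probabilities τ_n = p/(1−χ_n) − π_n are aligned
across agents and some agent n₁ has vanishing dual π_{n₁} = 0, then the duals
of the other agents satisfy the closed form
π_n = p(χ_n − χ_{n₁})/((1−χ_{n₁})(1−χ_n)), agent n₁ is a least risk-averse
prosumer (χ_{n₁} ≤ χ_n for all n), and the common risk-adjusted probability
equals p/(1 − min_n χ_n) = p/(1 − χ_{n₁}). -/
theorem aligned_risk_adjusted_probabilities {N : Type*} [Fintype N] [Nonempty N]
    (p : ℝ) (hp : 0 < p)
    (χ π τ : N → ℝ)
    (hχ0 : ∀ n, 0 ≤ χ n) (hχ1 : ∀ n, χ n < 1)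
    (hπ : ∀ n, 0 ≤ π n)
    (hτ : ∀ n, τ n = p / (1 - χ n) - π n)
    (halign : ∀ n m, τ n = τ m)
    (n₁ : N) (hn₁ : π n₁ = 0) :
    (∀ n, π n = p * (χ n - χ n₁) / ((1 - χ n₁) * (1 - χ n))) ∧
    (∀ n, χ n₁ ≤ χ n) ∧
    (∀ n, τ n = p / (1 - χ n₁)) := by
  have h1 : ∀ n : N, (0:ℝ) < 1 - χ n := fun n => by linarith [hχ1 n]
  have hτ1 : ∀ n, τ n = p / (1 - χ n₁) := by
    intro n
    rw [halign n n₁, hτ n₁, hn₁]; ring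
  have hπeq : ∀ n, π n = p * (χ n - χ n₁) / ((1 - χ n₁) * (1 - χ n)) := by
    intro n
    have h := hτ n
    rw [hτ1 n] at h
    have hn := (h1 n).ne'
    have hn1 := (h1 n₁).ne'
    field_simp at h ⊢
    linarith [h]
  refine ⟨hπeq, fun n => ?_, hτ1⟩
  have := hπ n
  rw [hπeq n] at this
  have hd : (0:ℝ) < (1 - χ n₁) * (1 - χ n) := mul_pos (h1 n₁) (h1 n)
  have := (div_nonneg_iff.mp this)
  rcases this with ⟨hnum, _⟩ | ⟨_, hneg⟩
  · nlinarith
  · linarith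
end

section
/- Let N be a finite set of agents and L a set of unordered pairs {n,m} of distinct agents (the edges); for each edge assume a symmetric congestion coefficient a_{nm} = a_{mn} > 0, and for each agent n assume ã_n > 0 and a_n > 0. Let each agent's decision be x_n = (D_n, G_n, (q_{mn})_{m:{n,m}∈L}) and define the pseudo-gradient map F whose components for agent n are: ∂_D = 2ã_n(D_n − D*_n), ∂_G = a_n G_n + b_n, and for each neighbor m, ∂_{q_{mn}} = 2a_{mn} q_{mn} + a_{mn} q_{nm} + b_{mn} + p₀. Then F is strictly monotone on the joint decision space: for all joint profiles x ≠ y, ⟨F(x) − F(y), x − y⟩ > 0. (Indeed on each edge the trade contribution equals a_{nm}·(Δ_1² + Δ_2² + (Δ_1 + Δ_2)²) where Δ_1, Δ_2 are the differences of the two directed trades on that edge.) -/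
/-- Strict monotonicity of the pseudo-gradient map of the risk-neutral
peer-to-peer game: for two distinct joint decision profiles (agreeing on
trades outside the edge set), the inner product of the difference of
pseudo-gradients with the difference of profiles is positive. -/
theorem pseudo_gradient_strictly_monotone {N : Type*} [Fintype N]
    (L : SimpleGraph N) [DecidableRel L.Adj]
    (a : N → N → ℝ) (hsym : ∀ n m, a n m = a m n)
    (hapos : ∀ n m, L.Adj n m → 0 < a n m)
    (atil aG : N → ℝ) (hatil : ∀ n, 0 < atil n) (haG : ∀ n, 0 < aG n)
    (Dstar bG : N → ℝ) (bq : N → N → ℝ) (p0 : ℝ)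
    (D G D' G' : N → ℝ) (q q' : N → N → ℝ)
    (hoff : ∀ n m, ¬ L.Adj n m → q n m = q' n m)
    (hne : ¬ (D = D' ∧ G = G' ∧ q = q')) :
    0 < ∑ n, ((2 * atil n * (D n - Dstar n) - 2 * atil n * (D' n - Dstar n)) * (D n - D' n)
        + ((aG n * G n + bG n) - (aG n * G' n + bG n)) * (G n - G' n)
        + ∑ m, (if L.Adj n m then
            ((2 * a n m * q n m + a n m * q m n + bq n m + p0)
              - (2 * a n m * q' n m + a n m * q' m n + bq n m + p0))
              * (q n m - q' n m)
          else 0)) := by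
  classical
  set x : N → N → ℝ := fun n m => q n m - q' n m with hxdef
  set f : N → N → ℝ := fun n m =>
    if L.Adj n m then a n m * ((2 * x n m + x m n) * x n m) else 0 with hfdef
  set g : N → N → ℝ := fun n m =>
    if L.Adj n m then a n m * (x n m ^ 2 + x m n ^ 2 + (x n m + x m n) ^ 2) else 0
    with hgdef
  -- rewrite the summand
  have hA : ∀ n, ((2 * atil n * (D n - Dstar n) - 2 * atil n * (D' n - Dstar n)) * (D n - D' n)
        + ((aG n * G n + bG n) - (aG n * G' n + bG n)) * (G n - G' n)
        + ∑ m, (if L.Adj n m then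
            ((2 * a n m * q n m + a n m * q m n + bq n m + p0)
              - (2 * a n m * q' n m + a n m * q' m n + bq n m + p0))
              * (q n m - q' n m)
          else 0))
      = 2 * atil n * (D n - D' n) ^ 2 + aG n * (G n - G' n) ^ 2 + ∑ m, f n m := by
    intro n
    have : ∀ m, (if L.Adj n m then
            ((2 * a n m * q n m + a n m * q m n + bq n m + p0)
              - (2 * a n m * q' n m + a n m * q' m n + bq n m + p0))
              * (q n m - q' n m)
          else 0) = f n m := by
      intro m
      simp only [hfdef, hxdef]
      split <;> ring
    rw [Finset.sum_congr rfl (fun m _ => this m)]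
    ring
  -- symmetrization identity
  have hfg : ∀ n m, f n m + f m n = g n m := by
    intro n m
    by_cases h : L.Adj n m
    · have h' : L.Adj m n := h.symm
      simp only [hfdef, hgdef, if_pos h, if_pos h', ← hsym n m]
      ring
    · have h' : ¬ L.Adj m n := fun hc => h hc.symm
      simp [hfdef, hgdef, if_neg h, if_neg h']
  have hdouble : 2 * (∑ n, ∑ m, f n m) = ∑ n, ∑ m, g n m := by
    have hcomm : (∑ n, ∑ m, f m n) = ∑ n, ∑ m, f n m := Finset.sum_comm
    calc 2 * (∑ n, ∑ m, f n m) = (∑ n, ∑ m, f n m) + (∑ n, ∑ m, f m n) := by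
          rw [hcomm]; ring
      _ = ∑ n, ∑ m, (f n m + f m n) := by
          rw [← Finset.sum_add_distrib]
          exact Finset.sum_congr rfl fun n _ => (Finset.sum_add_distrib).symm
      _ = ∑ n, ∑ m, g n m := by
          exact Finset.sum_congr rfl fun n _ => Finset.sum_congr rfl fun m _ => hfg n m
  -- nonnegativity of g
  have hgnn : ∀ n m, 0 ≤ g n m := by
    intro n m
    simp only [hgdef]
    split
    · rename_i h
      have := (hapos n m h).le
      positivity
    · exact le_refl 0
  -- the doubled sum
  have hkey : 2 * (∑ n, (2 * atil n * (D n - D' n) ^ 2 + aG n * (G n - G' n) ^ 2 + ∑ m, f n m))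
      = ∑ n, (4 * atil n * (D n - D' n) ^ 2 + 2 * aG n * (G n - G' n) ^ 2 + ∑ m, g n m) := by
    rw [Finset.mul_sum]
    have expand : ∀ n ∈ (Finset.univ : Finset N),
        2 * (2 * atil n * (D n - D' n) ^ 2 + aG n * (G n - G' n) ^ 2 + ∑ m, f n m)
        = (4 * atil n * (D n - D' n) ^ 2 + 2 * aG n * (G n - G' n) ^ 2) + 2 * ∑ m, f n m := by
      intro n _; ring
    rw [Finset.sum_congr rfl expand, Finset.sum_add_distrib]
    have : (∑ n, 2 * ∑ m, f n m) = ∑ n, ∑ m, g n m := by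
      rw [← Finset.mul_sum, hdouble]
    rw [this, ← Finset.sum_add_distrib]
  -- per-agent nonnegativity
  have hterm_nn : ∀ n, 0 ≤ 4 * atil n * (D n - D' n) ^ 2 + 2 * aG n * (G n - G' n) ^ 2
      + ∑ m, g n m := by
    intro n
    have h1 : 0 ≤ 4 * atil n * (D n - D' n) ^ 2 := by have := (hatil n).le; positivity
    have h2 : 0 ≤ 2 * aG n * (G n - G' n) ^ 2 := by have := (haG n).le; positivity
    have h3 : 0 ≤ ∑ m, g n m := Finset.sum_nonneg fun m _ => hgnn n m
    linarith
  -- find a positive witness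
  have hpos : ∃ n, 0 < 4 * atil n * (D n - D' n) ^ 2 + 2 * aG n * (G n - G' n) ^ 2
      + ∑ m, g n m := by
    by_cases hD : D = D'
    · by_cases hG : G = G'
      · have hq : q ≠ q' := fun h => hne ⟨hD, hG, h⟩
        obtain ⟨n, hn⟩ := Function.ne_iff.mp hq
        obtain ⟨m, hm⟩ := Function.ne_iff.mp hn
        have hadj : L.Adj n m := by
          by_contra hc; exact hm (hoff n m hc)
        have hx0 : x n m ≠ 0 := sub_ne_zero.mpr hm
        refine ⟨n, ?_⟩
        have hg : 0 < g n m := by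
          simp only [hgdef, if_pos hadj]
          have ha := hapos n m hadj
          have hx2 : 0 < x n m ^ 2 := pow_pos (abs_pos.mpr hx0) 2 |>.trans_eq (by
            rw [sq_abs])
          nlinarith [sq_nonneg (x m n), sq_nonneg (x n m + x m n)]
        have h3 : 0 < ∑ m', g n m' :=
          Finset.sum_pos' (fun m' _ => hgnn n m') ⟨m, Finset.mem_univ m, hg⟩
        have h1 : 0 ≤ 4 * atil n * (D n - D' n) ^ 2 := by have := (hatil n).le; positivity
        have h2 : 0 ≤ 2 * aG n * (G n - G' n) ^ 2 := by have := (haG n).le; positivity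
        linarith
      · obtain ⟨n, hn⟩ := Function.ne_iff.mp hG
        refine ⟨n, ?_⟩
        have h2 : 0 < 2 * aG n * (G n - G' n) ^ 2 := by
          have := haG n
          have hG0 : G n - G' n ≠ 0 := sub_ne_zero.mpr hn
          positivity
        have h1 : 0 ≤ 4 * atil n * (D n - D' n) ^ 2 := by have := (hatil n).le; positivity
        have h3 : 0 ≤ ∑ m, g n m := Finset.sum_nonneg fun m _ => hgnn n m
        linarith
    · obtain ⟨n, hn⟩ := Function.ne_iff.mp hD
      refine ⟨n, ?_⟩
      have h1 : 0 < 4 * atil n * (D n - D' n) ^ 2 := by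
        have := hatil n
        have hD0 : D n - D' n ≠ 0 := sub_ne_zero.mpr hn
        positivity
      have h2 : 0 ≤ 2 * aG n * (G n - G' n) ^ 2 := by have := (haG n).le; positivity
      have h3 : 0 ≤ ∑ m, g n m := Finset.sum_nonneg fun m _ => hgnn n m
      linarith
  obtain ⟨n₀, hn₀⟩ := hpos
  have hsum_pos : 0 < ∑ n, (4 * atil n * (D n - D' n) ^ 2 + 2 * aG n * (G n - G' n) ^ 2
      + ∑ m, g n m) :=
    Finset.sum_pos' (fun n _ => hterm_nn n) ⟨n₀, Finset.mem_univ n₀, hn₀⟩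
  rw [Finset.sum_congr rfl (fun n _ => hA n)]
  linarith [hkey ▸ hsum_pos]
end
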